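/- Let Γ be a simplicial complex and let a, b be two distinct free vertices of Γ contained in distinct facets E and F respectively, with |E| ≥ 2 and |F| ≥ 2. If Γ is vertex decomposable, then Γ + ⟨{a,b}⟩ is vertex decomposable. -/

import Mathlib

open Finset SimpleGraph

variable {V : Type*} [DecidableEq V]

/-- An abstract simplicial complex: contains the empty face and is downward closed. -/
def IsComplex (K : Set (Finset V)) : Prop :=
  (∅ : Finset V) ∈ K ∧ ∀ F ∈ K, ∀ G ⊆ F, G ∈ K

/-- `F` is a facet (maximal face) of `K`. -/
def IsFacet (K : Set (Finset V)) (F : Finset V) : Prop :=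
  F ∈ K ∧ ∀ G ∈ K, F ⊆ G → F = G

/-- `K` is pure: all facets have the same cardinality. -/
def IsPure (K : Set (Finset V)) : Prop :=
  ∀ F G, IsFacet K F → IsFacet K G → F.card = G.card

/-- Deletion `K - v`. -/
def del (K : Set (Finset V)) (v : V) : Set (Finset V) := {F ∈ K | v ∉ F}

/-- The link of a vertex. -/
def link (K : Set (Finset V)) (v : V) : Set (Finset V) :=
  {F | v ∉ F ∧ insert v F ∈ K}

/-- A shedding vertex: a vertex such that no face of the link is a facet of the deletion. -/
def IsSheddingVertex (K : Set (Finset V)) (v : V) : Prop :=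
  ({v} : Finset V) ∈ K ∧ ∀ F ∈ link K v, ¬ IsFacet (del K v) F

/-- `K` is a (possibly empty-face-only) simplex: the power set of some finset. -/
def IsSimplexComplex (K : Set (Finset V)) : Prop :=
  ∃ F : Finset V, K = {G | G ⊆ F}

/-- Vertex decomposability. -/
inductive VertexDecomposable : Set (Finset V) → Prop
  | simplex (K : Set (Finset V)) : IsSimplexComplex K → VertexDecomposable K
  | shed (K : Set (Finset V)) (v : V) : IsSheddingVertex K v →
      VertexDecomposable (link K v) → VertexDecomposable (del K v) →
      VertexDecomposable K

/-- The complex generated by a family of finsets. -/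
def gen (S : Set (Finset V)) : Set (Finset V) := {G | ∃ F ∈ S, G ⊆ F}

/-- A shelling order of the facets of `K`. -/
def IsShelling (K : Set (Finset V)) (l : List (Finset V)) : Prop :=
  l.Nodup ∧ (∀ F, IsFacet K F ↔ F ∈ l) ∧
  ∀ i : ℕ, (h : i + 1 < l.length) →
    (∃ F, IsFacet (gen {F | F ∈ l.take (i+1)} ∩ gen {l.get ⟨i+1, h⟩}) F) ∧
    ∀ F, IsFacet (gen {F | F ∈ l.take (i+1)} ∩ gen {l.get ⟨i+1, h⟩}) F →
      F.card + 1 = (l.get ⟨i+1, h⟩).card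

def Shellable (K : Set (Finset V)) : Prop := ∃ l, IsShelling K l

/-- Two facets are adjacent (intersect in codimension one). -/
def FacetAdj (K : Set (Finset V)) (F G : Finset V) : Prop :=
  IsFacet K F ∧ IsFacet K G ∧ (F ∩ G).card + 1 = F.card ∧ (F ∩ G).card + 1 = G.card

/-- A pure complex is strongly connected (connected in codimension 1). -/
def StronglyConnected (K : Set (Finset V)) : Prop :=
  IsPure K ∧ ∀ F G, IsFacet K F → IsFacet K G → Relation.ReflTransGen (FacetAdj K) F G

/-- The clique complex of a graph. -/
def cliqueComplex (G : SimpleGraph V) : Set (Finset V) := {F | G.IsClique (F : Set V)}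

/-- The pure `i`-skeleton of `K`: generated by the faces of dimension `i`. -/
def pureSkeleton (K : Set (Finset V)) (i : ℕ) : Set (Finset V) :=
  {G | ∃ F ∈ K, F.card = i + 1 ∧ G ⊆ F}

/-- The link of a face. -/
def linkFace (K : Set (Finset V)) (F : Finset V) : Set (Finset V) :=
  {G | Disjoint F G ∧ F ∪ G ∈ K}

section Homology
variable (k : Type*) [Field k]

/-- Boundary of a single face, w.r.t. a linear order `lo` on the vertices. -/
noncomputable def bdFace (lo : LinearOrder V) (F : Finset V) : Finset V →₀ k :=
  letI := lo
  ∑ v ∈ F, ((-1 : k) ^ ((F.filter (fun w => w < v)).card)) • Finsupp.single (F.erase v) (1 : k)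

/-- The boundary operator of the augmented oriented chain complex, w.r.t. `lo`. -/
noncomputable def bd (lo : LinearOrder V) (c : Finset V →₀ k) : Finset V →₀ k :=
  c.sum fun F a => a • bdFace k lo F

/-- The reduced homology of `K` in the degree of faces of cardinality `j`
(i.e. dimension `j - 1`) vanishes over `k`. -/
def HomologyVanishes (K : Set (Finset V)) (j : ℕ) : Prop :=
  ∀ lo : LinearOrder V, ∀ c : Finset V →₀ k,
    (∀ F ∈ c.support, F ∈ K ∧ F.card = j) → bd k lo c = 0 →
      ∃ d : Finset V →₀ k, (∀ F ∈ d.support, F ∈ K ∧ F.card = j + 1) ∧ bd k lo d = c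

/-- Reisner's criterion: `K` is Cohen–Macaulay over the field `k`. -/
def IsCMover (K : Set (Finset V)) : Prop :=
  ∀ F ∈ K, ∀ j : ℕ, (∃ G ∈ linkFace K F, j < G.card) →
    HomologyVanishes k (linkFace K F) j

/-- `K` is sequentially Cohen–Macaulay over `k`. -/
def IsSeqCMover (K : Set (Finset V)) : Prop :=
  ∀ i : ℕ, IsCMover k (pureSkeleton K i)

/-- The core of a complex. -/
def core (K : Set (Finset V)) : Set (Finset V) :=
  {F ∈ K | ∀ v ∈ F, ∃ G, IsFacet K G ∧ v ∉ G}

/-- The top reduced homology of `K` is one-dimensional (`≅ k`), where the top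
cardinality of a face of `K` is `m`. -/
def TopHomologyIsK (K : Set (Finset V)) (m : ℕ) : Prop :=
  (∃ G ∈ K, G.card = m) ∧ (∀ G ∈ K, G.card ≤ m) ∧
  ∀ lo : LinearOrder V, ∃ c : Finset V →₀ k, c ≠ 0 ∧
    (∀ F ∈ c.support, F ∈ K ∧ F.card = m) ∧ bd k lo c = 0 ∧
    ∀ c' : Finset V →₀ k, (∀ F ∈ c'.support, F ∈ K ∧ F.card = m) → bd k lo c' = 0 →
      ∃ a : k, c' = a • c

/-- Stanley's criterion: `K` is Gorenstein over `k`. -/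
def IsGorensteinOver (K : Set (Finset V)) : Prop :=
  ∀ F ∈ core K, ∃ m : ℕ,
    TopHomologyIsK k (linkFace (core K) F) m ∧
    ∀ j : ℕ, j < m → HomologyVanishes k (linkFace (core K) F) j

end Homology

/-- Adding a new facet `F` to a complex. -/
def addFace {V : Type} [DecidableEq V] (K : Set (Finset V)) (F : Finset V) :
    Set (Finset V) :=
  K ∪ {G | G ⊆ F}

/-- A free vertex: a vertex contained in exactly one facet. -/
def IsFreeVertex {V : Type} [DecidableEq V] (K : Set (Finset V)) (a : V) : Prop :=
  ({a} : Finset V) ∈ K ∧ ∃! F, IsFacet K F ∧ a ∈ F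

/-!
Induct on a shedding-vertex decomposition of `K`. A shedding vertex `v ∉ {a, b}` cannot lie in the
facet `E` of the free vertex `a`: otherwise `E \ {v}` would be a face of the link of `v` that is a
facet of the deletion. Hence adding `{a, b}` leaves the link of `v` unchanged and commutes with
deleting `v`, while `a` and `b` remain free in the same facets `E` and `F` of `K - v`. If instead
`v = a`, the deletion is unchanged and the link grows from the simplex on `E \ {a}` to that simplex
plus the isolated vertex `b`, which is vertex decomposable by shedding `b`. Vertex decomposable
complexes are finite, so every face lies in a facet, which is what freeness of a vertex needs.
-/

section Complex

variable {V : Type*} {K L : Set (Finset V)} {E G H : Finset V}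

theorem not_isFacet_of_ssubset (hH : H ∈ K) (hGH : G ⊂ H) : ¬IsFacet K G :=
  fun hG => hGH.ne (hG.2 H hH hGH.subset)

theorem not_isFacet_of_subset (hKL : K ⊆ L) (hG : G ∈ K) (hGK : ¬IsFacet K G) :
    ¬IsFacet L G :=
  fun hGL => hGK ⟨hG, fun H hH => hGL.2 H (hKL hH)⟩

theorem exists_isFacet_superset (hfin : K.Finite) (hG : G ∈ K) :
    ∃ E, IsFacet K E ∧ G ⊆ E := by
  obtain ⟨E, hGE, hE⟩ := hfin.exists_le_maximal hG
  exact ⟨E, ⟨hE.prop, fun H hH hEH => le_antisymm hEH (hE.le_of_ge hH hEH)⟩, hGE⟩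

variable {v : V}

theorem IsFacet.del (hE : IsFacet K E) (hvE : v ∉ E) : IsFacet (del K v) E :=
  ⟨⟨hE.1, hvE⟩, fun H hH => hE.2 H hH.1⟩

theorem IsComplex.del (hK : IsComplex K) (v : V) : IsComplex (del K v) :=
  ⟨⟨hK.1, Finset.notMem_empty v⟩,
    fun F hF G hGF => ⟨hK.2 F hF.1 G hGF, fun hvG => hF.2 (hGF hvG)⟩⟩

variable [DecidableEq V]

theorem link_subset_del (hK : IsComplex K) (v : V) : link K v ⊆ del K v :=
  fun G hG => ⟨hK.2 _ hG.2 G (Finset.subset_insert v G), hG.1⟩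

theorem VertexDecomposable.finite (h : VertexDecomposable K) : K.Finite := by
  induction h with
  | simplex K hs =>
    obtain ⟨S, rfl⟩ := hs
    exact S.powerset.finite_toSet.subset fun G hG => Finset.mem_powerset.mpr hG
  | shed K v _ _ _ ihL ihD =>
    refine (ihD.union (ihL.image (insert v))).subset fun G hG => ?_
    by_cases hvG : v ∈ G
    · exact Or.inr ⟨G.erase v, ⟨Finset.notMem_erase v G, by rwa [Finset.insert_erase hvG]⟩,
        Finset.insert_erase hvG⟩
    · exact Or.inl ⟨hG, hvG⟩

end Complex

section AddFace

variable {V : Type} [DecidableEq V] {K : Set (Finset V)} {σ E F G : Finset V} {a b v : V}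

theorem link_addFace_of_notMem (hv : v ∉ σ) : link (addFace K σ) v = link K v := by
  ext G
  simp [link, addFace, Finset.insert_subset_iff, hv]

theorem del_addFace_of_notMem (hv : v ∉ σ) :
    del (addFace K σ) v = addFace (del K v) σ := by
  ext G
  simp only [del, addFace, Set.mem_union, Set.mem_ofPred_eq]
  grind

theorem link_addFace_of_mem (hv : v ∈ σ) :
    link (addFace K σ) v = link K v ∪ {G | G ⊆ σ.erase v} := by
  ext G
  simp only [link, addFace, Set.mem_union, Set.mem_ofPred_eq, Finset.insert_subset_iff]
  grind

theorem del_addFace_of_erase_mem (hK : IsComplex K) (hσ : σ.erase v ∈ K) :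
    del (addFace K σ) v = del K v := by
  ext G
  simp only [del, addFace, Set.mem_union, Set.mem_ofPred_eq]
  constructor
  · rintro ⟨hG | hGσ, hvG⟩
    · exact ⟨hG, hvG⟩
    · exact ⟨hK.2 _ hσ G (Finset.subset_erase.mpr ⟨hGσ, hvG⟩), hvG⟩
  · rintro ⟨hG, hvG⟩
    exact ⟨.inl hG, hvG⟩

theorem IsFreeVertex.subset_of_mem (hfin : K.Finite) (ha : IsFreeVertex K a)
    (hE : IsFacet K E) (haE : a ∈ E) (hG : G ∈ K) (haG : a ∈ G) : G ⊆ E := by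
  obtain ⟨H, hH, hGH⟩ := exists_isFacet_superset hfin hG
  rwa [ha.2.unique ⟨hH, hGH haG⟩ ⟨hE, haE⟩] at hGH

theorem IsFreeVertex.notMem_of_ne (ha : IsFreeVertex K a) (hE : IsFacet K E)
    (hF : IsFacet K F) (haE : a ∈ E) (hEF : E ≠ F) : a ∉ F :=
  fun haF => hEF (ha.2.unique ⟨hE, haE⟩ ⟨hF, haF⟩)

theorem IsFreeVertex.link_eq (hK : IsComplex K) (hfin : K.Finite) (ha : IsFreeVertex K a)
    (hE : IsFacet K E) (haE : a ∈ E) : link K a = {G | G ⊆ E.erase a} := by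
  ext G
  refine ⟨fun ⟨haG, hG⟩ => ?_, fun hG => ?_⟩
  · have hGE := ha.subset_of_mem hfin hE haE hG (Finset.mem_insert_self a G)
    exact Finset.subset_erase.mpr ⟨(Finset.subset_insert a G).trans hGE, haG⟩
  · obtain ⟨hGE, haG⟩ := Finset.subset_erase.mp hG
    exact ⟨haG, hK.2 E hE.1 _ (Finset.insert_subset haE hGE)⟩

theorem IsFreeVertex.del (hfin : K.Finite) (ha : IsFreeVertex K a) (hE : IsFacet K E)
    (haE : a ∈ E) (hvE : v ∉ E) : IsFreeVertex (del K v) a := by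
  have hEv := hE.del hvE
  have hva : v ∉ ({a} : Finset V) :=
    Finset.notMem_singleton.mpr (ne_of_mem_of_not_mem haE hvE).symm
  refine ⟨⟨ha.1, hva⟩, E, ⟨hEv, haE⟩, ?_⟩
  rintro G ⟨hG, haG⟩
  exact hG.2 E hEv.1 (ha.subset_of_mem hfin hE haE hG.1.1 haG)

theorem IsSheddingVertex.notMem_of_isFreeVertex (hK : IsComplex K) (hfin : K.Finite)
    (hv : IsSheddingVertex K v) (ha : IsFreeVertex K a) (hE : IsFacet K E) (haE : a ∈ E)
    (hva : v ≠ a) : v ∉ E := by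
  intro hvE
  have hlink : E.erase v ∈ link K v :=
    ⟨Finset.notMem_erase v E, by rw [Finset.insert_erase hvE]; exact hE.1⟩
  refine hv.2 _ hlink ⟨link_subset_del hK v hlink, fun H hH hEH => ?_⟩
  have haH : a ∈ H := hEH (Finset.mem_erase.mpr ⟨Ne.symm hva, haE⟩)
  exact hEH.antisymm
    (Finset.subset_erase.mpr ⟨ha.subset_of_mem hfin hE haE hH.1 haH, hH.2⟩)

theorem IsSheddingVertex.addFace_of_notMem (hK : IsComplex K) (hv : IsSheddingVertex K v)
    (hvσ : v ∉ σ) : IsSheddingVertex (addFace K σ) v := by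
  refine ⟨.inl hv.1, fun G hG => ?_⟩
  rw [link_addFace_of_notMem hvσ] at hG
  rw [del_addFace_of_notMem hvσ]
  exact not_isFacet_of_subset Set.subset_union_left (link_subset_del hK v hG) (hv.2 G hG)

theorem vertexDecomposable_addFace_singleton {S : Finset V} (hS : S.Nonempty) (hb : b ∉ S) :
    VertexDecomposable (addFace {G | G ⊆ S} {b}) := by
  have hlink : link (addFace {G | G ⊆ S} {b}) b = {G | G ⊆ ∅} := by
    ext G
    constructor
    · rintro ⟨hbG, hGS | hGb⟩
      · exact absurd (hGS (Finset.mem_insert_self b G)) hb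
      · intro x hx
        exact absurd (Finset.mem_singleton.mp (hGb (Finset.mem_insert_of_mem hx)) ▸ hx) hbG
    · intro hG
      rw [Set.mem_ofPred_eq, Finset.subset_empty] at hG
      subst hG
      exact ⟨Finset.notMem_empty b, .inr (by simp)⟩
  have hdel : del (addFace {G | G ⊆ S} {b}) b = {G | G ⊆ S} := by
    ext G
    constructor
    · rintro ⟨hGS | hGb, hbG⟩
      · exact hGS
      · exact fun x hx => absurd (Finset.mem_singleton.mp (hGb hx) ▸ hx) hbG
    · exact fun hGS => ⟨.inl hGS, fun hbG => hb (hGS hbG)⟩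
  refine .shed _ b ⟨.inr (Finset.Subset.refl _), fun G hG => ?_⟩
    (by rw [hlink]; exact .simplex _ ⟨∅, rfl⟩) (by rw [hdel]; exact .simplex _ ⟨S, rfl⟩)
  rw [hlink, Set.mem_ofPred_eq, Finset.subset_empty] at hG
  rw [hdel, hG]
  exact not_isFacet_of_ssubset (Finset.Subset.refl S) (Finset.empty_ssubset.mpr hS)

theorem vertexDecomposable_addFace_pair_of_isSheddingVertex (hK : IsComplex K)
    (hfin : K.Finite) (hab : a ≠ b) (ha : IsFreeVertex K a) (hE : IsFacet K E) (haE : a ∈ E)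
    (hbE : b ∉ E) (hF : F ∈ K) (haF : a ∉ F) (hbF : b ∈ F) (hE2 : 2 ≤ E.card)
    (hF2 : 2 ≤ F.card) (hv : IsSheddingVertex K a) (hdel : VertexDecomposable (del K a)) :
    VertexDecomposable (addFace K {a, b}) := by
  have herase : ({a, b} : Finset V).erase a = {b} :=
    Finset.erase_insert (Finset.notMem_singleton.mpr hab)
  have hlink : link (addFace K {a, b}) a = link K a ∪ {G | G ⊆ {b}} := by
    rw [link_addFace_of_mem (Finset.mem_insert_self a {b}), herase]
  have hdelEq : del (addFace K {a, b}) a = del K a :=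
    del_addFace_of_erase_mem hK
      (by rw [herase]; exact hK.2 F hF _ (Finset.singleton_subset_iff.mpr hbF))
  refine .shed _ a ⟨.inl ha.1, fun G hG => ?_⟩ ?_ (hdelEq ▸ hdel)
  · rw [hdelEq]
    rw [hlink] at hG
    rcases hG with hG | hGb
    · exact hv.2 G hG
    · have hGF : G ⊆ F := hGb.trans (Finset.singleton_subset_iff.mpr hbF)
      obtain ⟨y, hyF, hyb⟩ := Finset.exists_mem_ne hF2 b
      have hyG : y ∉ G := fun hyG => hyb (Finset.mem_singleton.mp (hGb hyG))
      exact not_isFacet_of_ssubset ⟨hF, haF⟩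
        ((Finset.ssubset_iff_of_subset hGF).mpr ⟨y, hyF, hyG⟩)
  · obtain ⟨x, hxE, hxa⟩ := Finset.exists_mem_ne hE2 a
    rw [hlink, ha.link_eq hK hfin hE haE]
    exact vertexDecomposable_addFace_singleton ⟨x, Finset.mem_erase.mpr ⟨hxa, hxE⟩⟩
      fun hbE' => hbE (Finset.mem_of_mem_erase hbE')

end AddFace

theorem stmt7 {V : Type} [DecidableEq V] (K : Set (Finset V)) (hK : IsComplex K)
    (a b : V) (E F : Finset V) (hab : a ≠ b) (hEF : E ≠ F)
    (hE : IsFacet K E) (hF : IsFacet K F) (haE : a ∈ E) (hbF : b ∈ F)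
    (ha : IsFreeVertex K a) (hb : IsFreeVertex K b)
    (hE2 : 2 ≤ E.card) (hF2 : 2 ≤ F.card) :
    VertexDecomposable K → VertexDecomposable (addFace K {a, b}) := by
  intro h
  induction h with
  | simplex K hs =>
    obtain ⟨S, rfl⟩ := hs
    have hS : S ∈ {G | G ⊆ S} := Finset.Subset.refl S
    exact absurd ((hE.2 S hS hE.1).trans (hF.2 S hS hF.1).symm) hEF
  | shed K v hv hL hD _ ihD =>
    have hfin := (VertexDecomposable.shed K v hv hL hD).finite
    have haF := ha.notMem_of_ne hE hF haE hEF
    have hbE := hb.notMem_of_ne hF hE hbF hEF.symm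
    by_cases hva : v = a
    · subst hva
      exact vertexDecomposable_addFace_pair_of_isSheddingVertex hK hfin hab ha hE haE hbE
        hF.1 haF hbF hE2 hF2 hv hD
    by_cases hvb : v = b
    · subst hvb
      rw [Finset.pair_comm]
      exact vertexDecomposable_addFace_pair_of_isSheddingVertex hK hfin hab.symm hb hF hbF haF
        hE.1 hbE haE hF2 hE2 hv hD
    have hvE := hv.notMem_of_isFreeVertex hK hfin ha hE haE hva
    have hvF := hv.notMem_of_isFreeVertex hK hfin hb hF hbF hvb
    have hvab : v ∉ ({a, b} : Finset V) := by simp [hva, hvb]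
    refine .shed _ v (hv.addFace_of_notMem hK hvab) ?_ ?_
    · rwa [link_addFace_of_notMem hvab]
    · rw [del_addFace_of_notMem hvab]
      exact ihD (hK.del v) (hE.del hvE) (hF.del hvF) (ha.del hfin hE haE hvE)
        (hb.del hfin hF hbF hvF)
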